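/- arXiv:2403.03464 — 2 statements merged into one kernel-verified Lean document; each statement's English description precedes it below -/
import Mathlib

section
/- For all integers M, N ≥ 0, the sum over n ≥ 0 of q^{n^2-(M+N)n} / ((q;q)_n (q;q)_{M-n} (q;q)_{N-n}) equals q^{-MN} / ((q;q)_M (q;q)_N), where (q;q)_k denotes the q-Pochhammer symbol and 1/(q;q)_k = 0 for k < 0. -/
open scoped BigOperators

/-- Finite q-Pochhammer symbol $(a;q)_n = \prod_{j=0}^{n-1}(1-aq^j)$. -/
noncomputable def qPoch (q a : ℂ) (n : ℕ) : ℂ := ∏ j ∈ Finset.range n, (1 - a * q ^ j)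

/-- Reciprocal $1/(q;q)_k$ for an integer index, with the convention that it
vanishes for $k < 0$. -/
noncomputable def qPochRecipZ (q : ℂ) (k : ℤ) : ℂ :=
  if k < 0 then 0 else (qPoch q q k.toNat)⁻¹

/-!
Write `t_n` for the `n`-th summand and `S_M = ∑_{n ≤ M} t_n` (the summands with `n > M` vanish).
The single relation `(1 - q^k) / (q;q)_k = 1 / (q;q)_{k-1}`, valid for every integer `k` once `q`
is not a root of unity, shows that `(1 - q^{M+1})` times the `(n+1)`-st summand for `M + 1` is
`q^{-N} t_n` plus the telescoping difference `q^{-(n+1)} t_{n+1} - q^{-n} t_n`. Summing gives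
`(1 - q^{M+1}) S_{M+1} = q^{-N} S_M`, the recurrence in `M` obeyed by `q^{-MN} / ((q;q)_M (q;q)_N)`.
-/

open Finset

lemma qPoch_succ (q a : ℂ) (n : ℕ) : qPoch q a (n + 1) = qPoch q a n * (1 - a * q ^ n) :=
  prod_range_succ _ _

lemma qPochRecipZ_natCast (q : ℂ) (n : ℕ) : qPochRecipZ q n = (qPoch q q n)⁻¹ := by
  simp [qPochRecipZ]

lemma qPochRecipZ_of_neg (q : ℂ) {k : ℤ} (hk : k < 0) : qPochRecipZ q k = 0 := by
  simp [qPochRecipZ, hk]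

lemma one_sub_pow_ne_zero {q : ℂ} (hq : ¬IsOfFinOrder q) {j : ℕ} (hj : 0 < j) :
    1 - q ^ j ≠ 0 :=
  sub_ne_zero.2 fun h => hq (isOfFinOrder_iff_pow_eq_one.2 ⟨j, hj, h.symm⟩)

-- At `k = 0` both sides vanish: this is where the convention `1 / (q;q)_{-1} = 0` enters.
lemma one_sub_zpow_mul_qPochRecipZ {q : ℂ} (hq : ¬IsOfFinOrder q) (k : ℤ) :
    (1 - q ^ k) * qPochRecipZ q k = qPochRecipZ q (k - 1) := by
  rcases lt_trichotomy k 0 with hk | rfl | hk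
  · rw [qPochRecipZ_of_neg q hk, qPochRecipZ_of_neg q (by omega), mul_zero]
  · simp [qPochRecipZ]
  · obtain ⟨m, rfl⟩ : ∃ m : ℕ, k = m + 1 := ⟨(k - 1).toNat, by omega⟩
    rw [add_sub_cancel_right, ← Nat.cast_succ, qPochRecipZ_natCast, qPochRecipZ_natCast,
      zpow_natCast, qPoch_succ, mul_inv, ← pow_succ', mul_left_comm,
      mul_inv_cancel₀ (one_sub_pow_ne_zero hq m.succ_pos), mul_one]

noncomputable def qChuTerm (q : ℂ) (M N n : ℕ) : ℂ :=
  q ^ ((n : ℤ) ^ 2 - ((M : ℤ) + N) * n) * (qPoch q q n)⁻¹ *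
    qPochRecipZ q ((M : ℤ) - n) * qPochRecipZ q ((N : ℤ) - n)

lemma qChuTerm_eq_zero_of_lt (q : ℂ) {M n : ℕ} (N : ℕ) (h : M < n) : qChuTerm q M N n = 0 := by
  rw [qChuTerm, qPochRecipZ_of_neg q (by omega : (M : ℤ) - n < 0), mul_zero, zero_mul]

section

variable {q : ℂ} (hq : ¬IsOfFinOrder q)
include hq

lemma one_sub_pow_mul_qChuTerm_zero (M N : ℕ) :
    (1 - q ^ (M + 1)) * qChuTerm q (M + 1) N 0 = qChuTerm q M N 0 := by
  have hM := one_sub_zpow_mul_qPochRecipZ hq ((M + 1 : ℕ) : ℤ)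
  rw [zpow_natCast, Nat.cast_succ, add_sub_cancel_right] at hM
  simp only [qChuTerm, Nat.cast_zero, sub_zero, mul_zero, ← hM, Nat.cast_succ]
  ring

lemma one_sub_pow_mul_qChuTerm_succ (hq0 : q ≠ 0) (M N n : ℕ) :
    (1 - q ^ (M + 1)) * qChuTerm q (M + 1) N (n + 1) =
      q ^ (-((n + 1 : ℕ) : ℤ)) * qChuTerm q M N (n + 1) - q ^ (-(n : ℤ)) * qChuTerm q M N n
        + q ^ (-(N : ℤ)) * qChuTerm q M N n := by
  have hn : (qPoch q q n)⁻¹ = (1 - q ^ (n + 1)) * (qPoch q q (n + 1))⁻¹ := by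
    rw [qPoch_succ, mul_inv, ← pow_succ', mul_left_comm,
      mul_inv_cancel₀ (one_sub_pow_ne_zero hq n.succ_pos), mul_one]
  have hshift (K : ℕ) : qPochRecipZ q ((K : ℤ) - (n + 1 : ℕ)) =
      (1 - q ^ ((K : ℤ) - n)) * qPochRecipZ q ((K : ℤ) - n) := by
    rw [one_sub_zpow_mul_qPochRecipZ hq]; congr 1; push_cast; ring
  have e₁ : ((n + 1 : ℕ) : ℤ) ^ 2 - (((M + 1 : ℕ) : ℤ) + N) * (n + 1 : ℕ) =
      ((n : ℤ) ^ 2 - (M + N) * n) + (n - M - N) := by push_cast; ring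
  have e₂ : ((n + 1 : ℕ) : ℤ) ^ 2 - ((M : ℤ) + N) * (n + 1 : ℕ) =
      ((n : ℤ) ^ 2 - (M + N) * n) + (n + 1) + (n - M - N) := by push_cast; ring
  have e₃ : ((M + 1 : ℕ) : ℤ) - (n + 1 : ℕ) = M - n := by push_cast; ring
  simp only [qChuTerm, e₁, e₂, e₃, hn, hshift, zpow_add₀ hq0]
  simp only [zpow_sub₀ hq0, zpow_neg, zpow_natCast, Nat.cast_succ, zpow_add₀ hq0, zpow_one]
  field_simp
  ring

lemma one_sub_pow_mul_sum_qChuTerm (hq0 : q ≠ 0) (M N : ℕ) :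
    (1 - q ^ (M + 1)) * ∑ n ∈ range (M + 1 + 1), qChuTerm q (M + 1) N n =
      q ^ (-(N : ℤ)) * ∑ n ∈ range (M + 1), qChuTerm q M N n := by
  rw [mul_sum, sum_range_succ', one_sub_pow_mul_qChuTerm_zero hq,
    sum_congr rfl fun n _ => one_sub_pow_mul_qChuTerm_succ hq hq0 M N n, sum_add_distrib,
    sum_range_sub (fun i => q ^ (-(i : ℤ)) * qChuTerm q M N i), ← mul_sum,
    qChuTerm_eq_zero_of_lt q N M.lt_succ_self]
  simp

lemma sum_range_qChuTerm (hq0 : q ≠ 0) (M N : ℕ) :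
    ∑ n ∈ range (M + 1), qChuTerm q M N n =
      q ^ (-(M : ℤ) * N) * (qPoch q q M)⁻¹ * (qPoch q q N)⁻¹ := by
  induction M with
  | zero => simp [qChuTerm, qPochRecipZ, qPoch]
  | succ M ih =>
    have hM := one_sub_pow_ne_zero hq M.succ_pos
    apply mul_left_cancel₀ hM
    rw [one_sub_pow_mul_sum_qChuTerm hq hq0, ih, qPoch_succ, ← pow_succ', mul_inv]
    push_cast
    rw [show -((M : ℤ) + 1) * N = -N + -M * N by ring, zpow_add₀ hq0]
    field_simp

end

/-- Specialised second q-Chu--Vandermonde summation: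
$\sum_{n\ge 0} q^{n^2-(M+N)n}/((q;q)_n(q;q)_{M-n}(q;q)_{N-n}) = q^{-MN}/((q;q)_M(q;q)_N)$. -/
theorem qChuVandermonde_special (q : ℂ) (hq : ‖q‖ < 1) (hq0 : q ≠ 0) (M N : ℕ) :
    ∑' n : ℕ, q ^ ((n : ℤ) ^ 2 - ((M : ℤ) + N) * n) * (qPoch q q n)⁻¹ *
        qPochRecipZ q ((M : ℤ) - n) * qPochRecipZ q ((N : ℤ) - n)
      = q ^ (-(M : ℤ) * N) * (qPoch q q M)⁻¹ * (qPoch q q N)⁻¹ := by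
  have hq' : ¬IsOfFinOrder q := fun h => hq.ne h.norm_eq_one
  calc ∑' n : ℕ, qChuTerm q M N n
      = ∑ n ∈ range (M + 1), qChuTerm q M N n :=
        tsum_eq_sum fun n hn => qChuTerm_eq_zero_of_lt q N (by simpa using hn)
    _ = _ := sum_range_qChuTerm hq' hq0 M N
end

section
/- The double bilateral sum ∑_{m,n ∈ ℤ} z₁^m z₂^n q^{(m² + n² - mn)/2} equals (-z₁²z₂q^{3/2}, -z₁^{-2}z₂^{-1}q^{3/2}, q³; q³)_∞ · (-z₂q^{1/2}, -z₂^{-1}q^{1/2}, q; q)_∞ + z₁ q^{1/2} · (-z₁²z₂q³, -z₁^{-2}z₂^{-1}, q³; q³)_∞ · (-z₂, -z₂^{-1}q, q; q)_∞. -/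
open scoped BigOperators

open Filter Finset Topology

/-- Infinite q-Pochhammer symbol $(a;q)_\infty$. -/
noncomputable def qPochInf (q a : ℂ) : ℂ := ∏' j : ℕ, (1 - a * q ^ j)

/- ### Auxiliary infinite-product lemmas -/

lemma hasProd_zero_of_exists_zero {f : ℕ → ℂ} (h : ∃ j, f j = 0) : HasProd f 0 := by
  obtain ⟨j₀, hj⟩ := h
  have hev : ∀ᶠ s in (atTop : Filter (Finset ℕ)), ∏ i ∈ s, f i = 0 :=
    eventually_atTop.2 ⟨{j₀}, fun s hs => Finset.prod_eq_zero (hs (Finset.mem_singleton_self j₀)) hj⟩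
  exact (tendsto_const_nhds : Filter.Tendsto (fun _ : Finset ℕ => (0:ℂ)) _ _).congr'
    (hev.mono fun s hs => hs.symm)

lemma summable_log_one_sub (q a : ℂ) (hq : ‖q‖ < 1) :
    Summable (fun j : ℕ => Complex.log (1 - a * q ^ j)) := by
  have hgeo : Summable (fun j : ℕ => (3/2 : ℝ) * (‖a‖ * ‖q‖ ^ j)) :=
    ((summable_geometric_of_lt_one (norm_nonneg q) hq).mul_left ‖a‖).mul_left _
  apply Summable.of_norm_bounded_eventually_nat hgeo
  have h0 : Tendsto (fun j : ℕ => ‖a‖ * ‖q‖ ^ j) atTop (𝓝 0) := by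
    simpa using (tendsto_pow_atTop_nhds_zero_of_lt_one (norm_nonneg q) hq).const_mul ‖a‖
  filter_upwards [h0.eventually_le_const (by norm_num : (0:ℝ) < 1/2)] with j hj
  have hb : ‖-(a * q ^ j)‖ ≤ 1/2 := by
    rw [norm_neg, norm_mul, norm_pow]; exact hj
  have := Complex.norm_log_one_add_half_le_self hb
  rw [show (1 : ℂ) + -(a * q ^ j) = 1 - a * q ^ j by ring] at this
  calc ‖Complex.log (1 - a * q ^ j)‖ ≤ 3/2 * ‖-(a * q ^ j)‖ := this
    _ ≤ 3/2 * (‖a‖ * ‖q‖ ^ j) := by rw [norm_neg, norm_mul, norm_pow]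

lemma multipliable_one_sub (q a : ℂ) (hq : ‖q‖ < 1) :
    Multipliable (fun j : ℕ => 1 - a * q ^ j) := by
  by_cases h : ∃ j, (1 : ℂ) - a * q ^ j = 0
  · exact ⟨0, hasProd_zero_of_exists_zero h⟩
  · push_neg at h
    exact Complex.multipliable_of_summable_log (summable_log_one_sub q a hq)

lemma qPochInf_ne_zero' (q a : ℂ) (hq : ‖q‖ < 1) (h : ∀ j : ℕ, 1 - a * q ^ j ≠ 0) :
    (∏' j : ℕ, (1 - a * q ^ j)) ≠ 0 := by
  have := Complex.cexp_tsum_eq_tprod (f := fun j => 1 - a * q ^ j) h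
    (summable_log_one_sub q a hq)
  rw [← this]
  exact Complex.exp_ne_zero _

lemma tendsto_qPochInf (q a : ℂ) (hq : ‖q‖ < 1) :
    Tendsto (fun N : ℕ => ∏ i ∈ Finset.range N, (1 - a * q ^ i)) atTop (𝓝 (qPochInf q a)) :=
  (multipliable_one_sub q a hq).hasProd.tendsto_prod_nat

lemma qPochInf_ne_zero (q a : ℂ) (hq : ‖q‖ < 1) (h : ∀ j : ℕ, 1 - a * q ^ j ≠ 0) :
    qPochInf q a ≠ 0 := qPochInf_ne_zero' q a hq h

noncomputable def Ppoch (Q : ℂ) (M : ℕ) : ℂ := ∏ i ∈ Finset.range M, (1 - Q ^ (i + 1))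

noncomputable def qBinom (Q : ℂ) (M k : ℕ) : ℂ :=
  if k ≤ M then Ppoch Q M / (Ppoch Q k * Ppoch Q (M - k)) else 0

lemma one_sub_pow_ne_zero_s2 {Q : ℂ} (hQ : ‖Q‖ < 1) (j : ℕ) : (1 : ℂ) - Q ^ (j + 1) ≠ 0 := by
  intro h
  have h1 : Q ^ (j+1) = 1 := by linear_combination -h
  have : ‖Q ^ (j+1)‖ < 1 := by
    rw [norm_pow]
    exact pow_lt_one₀ (norm_nonneg Q) hQ (Nat.succ_ne_zero j)
  rw [h1] at this; simp at this

lemma Ppoch_ne_zero {Q : ℂ} (hQ : ‖Q‖ < 1) (M : ℕ) : Ppoch Q M ≠ 0 :=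
  Finset.prod_ne_zero_iff.2 fun i _ => one_sub_pow_ne_zero_s2 hQ i

lemma Ppoch_succ (Q : ℂ) (M : ℕ) : Ppoch Q (M + 1) = Ppoch Q M * (1 - Q ^ (M + 1)) :=
  Finset.prod_range_succ _ _

lemma qBinom_zero {Q : ℂ} (hQ : ‖Q‖ < 1) (M : ℕ) : qBinom Q M 0 = 1 := by
  rw [qBinom, if_pos (Nat.zero_le M), Nat.sub_zero, show Ppoch Q 0 = 1 from rfl, one_mul,
    div_self (Ppoch_ne_zero hQ M)]

lemma qBinom_self {Q : ℂ} (hQ : ‖Q‖ < 1) (M : ℕ) : qBinom Q M M = 1 := by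
  rw [qBinom, if_pos le_rfl, Nat.sub_self, show Ppoch Q 0 = 1 from rfl, mul_one,
    div_self (Ppoch_ne_zero hQ M)]

lemma qBinom_of_gt {Q : ℂ} {M k : ℕ} (h : M < k) : qBinom Q M k = 0 := by
  simp [qBinom, Nat.not_le.2 h]

lemma qBinom_pascal {Q : ℂ} (hQ : ‖Q‖ < 1) (M k : ℕ) :
    qBinom Q (M + 1) (k + 1) = qBinom Q M (k + 1) + Q ^ (M - k) * qBinom Q M k := by
  rcases lt_trichotomy k M with hkM | rfl | hkM
  · -- k < M, so k+1 ≤ M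
    obtain ⟨j, rfl⟩ : ∃ j, M = k + (j + 1) := ⟨M - k - 1, by omega⟩
    rw [qBinom, qBinom, qBinom, if_pos (by omega), if_pos (by omega), if_pos (by omega)]
    have e1 : k + (j + 1) + 1 - (k + 1) = j + 1 := by omega
    have e2 : k + (j + 1) - (k + 1) = j := by omega
    have e3 : k + (j + 1) - k = j + 1 := by omega
    rw [e1, e2, e3]
    rw [show k + (j + 1) + 1 = (k + (j + 1)) + 1 from rfl, Ppoch_succ]
    rw [show Ppoch Q (j + 1) = Ppoch Q j * (1 - Q ^ (j + 1)) from Ppoch_succ Q j]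
    rw [show Ppoch Q (k + 1) = Ppoch Q k * (1 - Q ^ (k + 1)) from Ppoch_succ Q k]
    have hPk := Ppoch_ne_zero hQ k
    have hPj := Ppoch_ne_zero hQ j
    have hPM := Ppoch_ne_zero hQ (k + (j + 1))
    have h1 := one_sub_pow_ne_zero_s2 hQ k
    have h2 := one_sub_pow_ne_zero_s2 hQ j
    have hMk : k + (j + 1) - k = j + 1 := by omega
    field_simp
    ring_nf
  · -- k = M
    rw [qBinom_self hQ, qBinom_of_gt (by omega), qBinom_self hQ]
    simp
  · -- M < k
    rw [qBinom_of_gt (by omega), qBinom_of_gt (by omega), qBinom_of_gt (by omega)]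
    simp

lemma gauss_binomial {Q : ℂ} (hQ : ‖Q‖ < 1) (t : ℂ) (M : ℕ) :
    ∏ i ∈ Finset.range M, (1 + t * Q ^ i)
      = ∑ k ∈ Finset.range (M + 1), Q ^ (k.choose 2) * qBinom Q M k * t ^ k := by
  induction M with
  | zero => simp [qBinom_zero hQ]
  | succ M ih =>
    rw [Finset.prod_range_succ, ih]
    have key : ∀ i ∈ Finset.range (M+1),
        Q ^ ((i+1).choose 2) * qBinom Q (M+1) (i+1) * t ^ (i+1)
          = Q ^ ((i+1).choose 2) * qBinom Q M (i+1) * t ^ (i+1)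
            + (t * Q ^ M) * (Q ^ (i.choose 2) * qBinom Q M i * t ^ i) := by
      intro i hi
      have hiM : i ≤ M := Nat.lt_succ_iff.1 (Finset.mem_range.1 hi)
      have hch : (i+1).choose 2 = i.choose 2 + i := by
        rw [show (i+1).choose 2 = i.choose 1 + i.choose 2 from Nat.choose_succ_succ i 1,
          Nat.choose_one_right]; omega
      have hq : Q ^ (i.choose 2 + i) * Q ^ (M - i) = Q ^ (i.choose 2) * Q ^ M := by
        rw [← pow_add, ← pow_add]; congr 1; omega
      rw [qBinom_pascal hQ, hch]
      linear_combination (t ^ (i+1) * qBinom Q M i) * hq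
    have expand : ∑ k ∈ Finset.range (M+2), Q ^ (k.choose 2) * qBinom Q (M+1) k * t ^ k
        = (∑ k ∈ Finset.range (M+1), Q ^ (k.choose 2) * qBinom Q M k * t ^ k)
          + (t * Q ^ M) * ∑ k ∈ Finset.range (M+1), Q ^ (k.choose 2) * qBinom Q M k * t ^ k := by
      rw [Finset.sum_range_succ' _ (M+1), Finset.sum_congr rfl key, Finset.sum_add_distrib,
        ← Finset.mul_sum]
      have peel : ∑ i ∈ Finset.range (M+1), Q ^ ((i+1).choose 2) * qBinom Q M (i+1) * t ^ (i+1)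
          = ∑ k ∈ Finset.range (M+1), Q ^ (k.choose 2) * qBinom Q M k * t ^ k
            - Q ^ ((0:ℕ).choose 2) * qBinom Q M 0 * t ^ 0 := by
        rw [eq_sub_iff_add_eq,
          ← Finset.sum_range_succ' (fun k => Q ^ (k.choose 2) * qBinom Q M k * t ^ k) (M+1),
          Finset.sum_range_succ]
        simp [qBinom_of_gt (Nat.lt_succ_self M)]
      rw [peel]
      simp [qBinom_zero hQ]
      ring
    rw [show M + 1 + 1 = M + 2 from rfl] at expand
    rw [expand]
    ring

lemma two_choose_two_add (k : ℕ) : 2 * k.choose 2 + k = k ^ 2 := by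
  induction k with
  | zero => simp
  | succ k ih =>
    rw [show (k+1).choose 2 = k.choose 1 + k.choose 2 from Nat.choose_succ_succ k 1,
      Nat.choose_one_right]
    have : (k+1)^2 = k^2 + 2*k + 1 := by ring
    omega

lemma sum_two_mul_add_one (N : ℕ) : ∑ i ∈ Finset.range N, (2 * i + 1) = N ^ 2 := by
  induction N with
  | zero => simp
  | succ N ih =>
    rw [Finset.sum_range_succ, ih]
    ring

lemma finite_jtp {x : ℂ} (hx0 : x ≠ 0) (hx1 : ‖x‖ < 1) {z : ℂ} (hz : z ≠ 0) (N : ℕ) :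
    ∏ i ∈ Finset.range N, ((1 + z * x ^ (2 * i + 1)) * (1 + z⁻¹ * x ^ (2 * i + 1)))
      = ∑ k ∈ Finset.range (2 * N + 1),
          qBinom (x ^ 2) (2 * N) k * x ^ (((k : ℤ) - N) ^ 2) * z ^ ((k : ℤ) - N) := by
  have hQ : ‖(x:ℂ) ^ 2‖ < 1 := by
    rw [norm_pow]
    exact pow_lt_one₀ (norm_nonneg x) hx1 (by norm_num)
  have hxpow : ∀ m : ℕ, (x : ℂ) ^ m ≠ 0 := fun m => pow_ne_zero m hx0
  have hzpow : (z : ℂ) ^ N ≠ 0 := pow_ne_zero N hz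
  set t : ℂ := z * (x ^ (2 * N))⁻¹ * x with ht
  -- Block 2 : the product over [N, 2N)
  have block2 : ∀ i : ℕ, 1 + t * (x ^ 2) ^ (N + i) = 1 + z * x ^ (2 * i + 1) := by
    intro i
    congr 1
    rw [ht]
    field_simp
    ring
  -- Block 1 : the product over [0, N), after multiplying by x^(N²)
  have block1 : x ^ (N ^ 2) * ∏ i ∈ Finset.range N, (1 + t * (x ^ 2) ^ i)
      = z ^ N * ∏ i ∈ Finset.range N, (1 + z⁻¹ * x ^ (2 * i + 1)) := by
    have hxN : (x : ℂ) ^ (N ^ 2) = ∏ i ∈ Finset.range N, x ^ (2 * (N - 1 - i) + 1) := by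
      rw [Finset.prod_pow_eq_pow_sum]
      congr 1
      rw [← sum_two_mul_add_one N]
      exact (Finset.sum_range_reflect (fun i => 2 * i + 1) N).symm
    rw [hxN, ← Finset.prod_mul_distrib]
    have : ∀ i ∈ Finset.range N,
        x ^ (2 * (N - 1 - i) + 1) * (1 + t * (x ^ 2) ^ i)
          = z * (1 + z⁻¹ * x ^ (2 * (N - 1 - i) + 1)) := by
      intro i hi
      have hiN : i < N := Finset.mem_range.1 hi
      have he : 2 * (N - 1 - i) + 1 + (2 * i + 1) = 2 * N := by omega
      have hxe : x ^ (2 * (N - 1 - i) + 1) * x ^ (2 * i + 1) = x ^ (2 * N) := by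
        rw [← pow_add, he]
      have hx2 : x ^ (2 * (N - 1 - i) + 1) * (t * (x ^ 2) ^ i) = z := by
        rw [ht, ← pow_mul]
        field_simp
        linear_combination hxe
      calc x ^ (2 * (N - 1 - i) + 1) * (1 + t * (x ^ 2) ^ i)
          = x ^ (2 * (N - 1 - i) + 1) + x ^ (2 * (N - 1 - i) + 1) * (t * (x ^ 2) ^ i) := by ring
        _ = x ^ (2 * (N - 1 - i) + 1) + z := by rw [hx2]
        _ = z * (1 + z⁻¹ * x ^ (2 * (N - 1 - i) + 1)) := by field_simp; ring
    rw [Finset.prod_congr rfl this, Finset.prod_mul_distrib, Finset.prod_const,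
      Finset.card_range]
    congr 1
    exact Finset.prod_range_reflect (fun i => 1 + z⁻¹ * x ^ (2 * i + 1)) N
  -- Assemble with the Gauss binomial theorem
  have main : x ^ (N ^ 2) * ∏ i ∈ Finset.range (2 * N), (1 + t * (x ^ 2) ^ i)
      = z ^ N * ∏ i ∈ Finset.range N, ((1 + z * x ^ (2 * i + 1)) * (1 + z⁻¹ * x ^ (2 * i + 1))) := by
    rw [two_mul, Finset.prod_range_add]
    rw [Finset.prod_congr rfl (fun i _ => block2 i)]
    rw [← mul_assoc, block1, Finset.prod_mul_distrib]
    ring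
  -- Solve for the target product
  have lhs_eq : ∏ i ∈ Finset.range N, ((1 + z * x ^ (2 * i + 1)) * (1 + z⁻¹ * x ^ (2 * i + 1)))
      = x ^ (N ^ 2) * (z ^ N)⁻¹ * ∏ i ∈ Finset.range (2 * N), (1 + t * (x ^ 2) ^ i) := by
    apply mul_left_cancel₀ hzpow
    rw [← main]
    field_simp
  rw [lhs_eq, gauss_binomial hQ t (2 * N), Finset.mul_sum]
  apply Finset.sum_congr rfl
  intro k hk
  have hk2N : k ≤ 2 * N := Nat.lt_succ_iff.1 (Finset.mem_range.1 hk)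
  have hA : x ^ (N ^ 2) * ((x ^ 2) ^ (k.choose 2) * x ^ k) * (((x ^ (2 * N)) ^ k)⁻¹)
      = x ^ (((k : ℤ) - N) ^ 2) := by
    rw [← pow_mul, ← pow_add, ← pow_add, ← pow_mul]
    rw [show N ^ 2 + (2 * k.choose 2 + k) = N ^ 2 + k ^ 2 by rw [two_choose_two_add]]
    have hcast : ((k : ℤ) - N) ^ 2 = (↑(N ^ 2 + k ^ 2) : ℤ) - ↑(2 * N * k) := by
      push_cast; ring
    rw [hcast, zpow_sub₀ hx0, zpow_natCast, zpow_natCast, div_eq_mul_inv]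
  have hB : z ^ k * (z ^ N)⁻¹ = z ^ ((k : ℤ) - N) := by
    rw [zpow_sub₀ hz, zpow_natCast, zpow_natCast, div_eq_mul_inv]
  calc x ^ (N ^ 2) * (z ^ N)⁻¹ * ((x ^ 2) ^ (k.choose 2) * qBinom (x ^ 2) (2 * N) k * t ^ k)
      = qBinom (x ^ 2) (2 * N) k
          * (x ^ (N ^ 2) * ((x ^ 2) ^ (k.choose 2) * x ^ k) * (((x ^ (2 * N)) ^ k)⁻¹))
          * (z ^ k * (z ^ N)⁻¹) := by
        rw [ht, mul_pow, mul_pow, inv_pow]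
        ring
    _ = qBinom (x ^ 2) (2 * N) k * x ^ (((k : ℤ) - N) ^ 2) * z ^ ((k : ℤ) - N) := by
        rw [hA, hB]

lemma summable_nat_theta {c r : ℝ} (hc : 0 ≤ c) (hr0 : 0 ≤ r) (hr : r < 1) :
    Summable (fun n : ℕ => c ^ n * r ^ (n ^ 2)) := by
  apply summable_of_ratio_norm_eventually_le (r := 1/2) (by norm_num)
  have h0 : Tendsto (fun n : ℕ => (c * r) * (r ^ 2) ^ n) atTop (𝓝 0) := by
    simpa using (tendsto_pow_atTop_nhds_zero_of_lt_one (by positivity)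
      (by nlinarith : r ^ 2 < 1)).const_mul (c * r)
  filter_upwards [h0.eventually_le_const (by norm_num : (0:ℝ) < 1/2)] with n hn
  have hterm : c ^ (n+1) * r ^ ((n+1) ^ 2) = (c ^ n * r ^ (n ^ 2)) * ((c * r) * (r ^ 2) ^ n) := by
    have h1 : r ^ ((n+1)^2) = r ^ (n^2) * (r^2)^n * r := by
      rw [← pow_mul, ← pow_add, ← pow_succ]
      congr 1
      ring
    rw [h1, pow_succ]
    ring
  have hnn : (0:ℝ) ≤ (c * r) * (r ^ 2) ^ n := by positivity
  rw [Real.norm_of_nonneg (by positivity), Real.norm_of_nonneg (by positivity), hterm]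
  calc (c ^ n * r ^ (n ^ 2)) * ((c * r) * (r ^ 2) ^ n)
      ≤ (c ^ n * r ^ (n ^ 2)) * (1/2) := by
        apply mul_le_mul_of_nonneg_left hn (by positivity)
    _ = 1/2 * (c ^ n * r ^ (n ^ 2)) := by ring

lemma summable_norm_theta {x z : ℂ} (hx0 : x ≠ 0) (hx1 : ‖x‖ < 1) (hz : z ≠ 0) :
    Summable (fun n : ℤ => ‖x ^ (n ^ 2) * z ^ n‖) := by
  apply Summable.of_nat_of_neg
  · apply Summable.congr (summable_nat_theta (norm_nonneg z) (norm_nonneg x) hx1)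
    intro n
    rw [norm_mul, norm_zpow, norm_zpow,
      show ((n:ℤ)^2) = ((n^2 : ℕ) : ℤ) by push_cast; ring, zpow_natCast, zpow_natCast]
    ring
  · apply Summable.congr (summable_nat_theta (norm_nonneg z⁻¹) (norm_nonneg x) hx1)
    intro n
    rw [norm_mul, norm_zpow, norm_zpow,
      show ((-(n:ℤ))^2) = ((n^2 : ℕ) : ℤ) by push_cast; ring, zpow_natCast, zpow_neg,
      zpow_natCast, norm_inv, ← inv_pow]
    ring

theorem jacobi_triple_product {x : ℂ} (hx0 : x ≠ 0) (hx1 : ‖x‖ < 1) {z : ℂ} (hz : z ≠ 0) :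
    ∑' n : ℤ, x ^ (n ^ 2) * z ^ n
      = qPochInf (x ^ 2) (x ^ 2) * qPochInf (x ^ 2) (-(z * x)) * qPochInf (x ^ 2) (-(z⁻¹ * x)) := by
  have hQ : ‖x ^ 2‖ < 1 := by
    rw [norm_pow]; exact pow_lt_one₀ (norm_nonneg x) hx1 (by norm_num)
  have hzi : z⁻¹ ≠ 0 := inv_ne_zero hz
  set L : ℂ := qPochInf (x ^ 2) (x ^ 2) with hL
  have hPfact : ∀ j : ℕ, (1 : ℂ) - x ^ 2 * (x ^ 2) ^ j = 1 - (x ^ 2) ^ (j + 1) :=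
    fun j => by rw [pow_succ (x^2) j]; ring
  have hLne : L ≠ 0 :=
    qPochInf_ne_zero _ _ hQ fun j => by rw [hPfact j]; exact one_sub_pow_ne_zero_s2 hQ j
  have hPlim : Tendsto (fun M : ℕ => Ppoch (x ^ 2) M) atTop (𝓝 L) :=
    (tendsto_qPochInf (x ^ 2) (x ^ 2) hQ).congr
      fun M => Finset.prod_congr rfl fun i _ => hPfact i
  -- uniform lower bound on ‖Ppoch‖
  have hPpos : ∀ M, 0 < ‖Ppoch (x ^ 2) M‖ := fun M => norm_pos_iff.2 (Ppoch_ne_zero hQ M)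
  have hLpos : 0 < ‖L‖ := norm_pos_iff.2 hLne
  obtain ⟨K, hK⟩ : ∃ K : ℕ, ∀ M ≥ K, ‖L‖ / 2 < ‖Ppoch (x ^ 2) M‖ :=
    eventually_atTop.1 (hPlim.norm.eventually_const_lt (by linarith))
  set c : ℝ := min (‖L‖ / 2)
    ((Finset.range (K + 1)).inf' ⟨0, Finset.mem_range.2 (Nat.succ_pos K)⟩
      fun k => ‖Ppoch (x ^ 2) k‖) with hc
  have hcpos : 0 < c := by
    rw [hc]
    apply lt_min (by linarith)
    exact (Finset.lt_inf'_iff _).2 fun k _ => hPpos k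
  have hclb : ∀ M, c ≤ ‖Ppoch (x ^ 2) M‖ := by
    intro M
    rcases le_or_gt M K with h | h
    · exact le_trans (min_le_right _ _)
        (Finset.inf'_le _ (Finset.mem_range.2 (Nat.lt_succ_of_le h)))
    · exact le_trans (min_le_left _ _) (le_of_lt (hK M h.le))
  -- uniform upper bound on ‖Ppoch‖
  set U : ℝ := Real.exp (∑' i : ℕ, ‖x ^ 2‖ ^ i) with hU
  have hUb : ∀ M, ‖Ppoch (x ^ 2) M‖ ≤ U := by
    intro M
    rw [Ppoch, norm_prod]
    calc ∏ i ∈ Finset.range M, ‖(1 : ℂ) - (x ^ 2) ^ (i + 1)‖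
        ≤ ∏ i ∈ Finset.range M, Real.exp (‖x ^ 2‖ ^ (i + 1)) := by
          apply Finset.prod_le_prod (fun i _ => norm_nonneg _)
          intro i _
          calc ‖(1 : ℂ) - (x ^ 2) ^ (i + 1)‖ ≤ ‖(1 : ℂ)‖ + ‖(x ^ 2) ^ (i + 1)‖ := norm_sub_le _ _
            _ = ‖x ^ 2‖ ^ (i + 1) + 1 := by rw [norm_one, norm_pow]; ring
            _ ≤ Real.exp (‖x ^ 2‖ ^ (i + 1)) := Real.add_one_le_exp _
      _ = Real.exp (∑ i ∈ Finset.range M, ‖x ^ 2‖ ^ (i + 1)) := by rw [Real.exp_sum]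
      _ ≤ U := by
          rw [hU]
          apply Real.exp_le_exp.2
          calc ∑ i ∈ Finset.range M, ‖x ^ 2‖ ^ (i + 1)
              ≤ ∑ i ∈ Finset.range M, ‖x ^ 2‖ ^ i := by
                apply Finset.sum_le_sum
                intro i _
                exact pow_le_pow_of_le_one (norm_nonneg _) hQ.le (Nat.le_succ i)
            _ ≤ ∑' i : ℕ, ‖x ^ 2‖ ^ i :=
                Summable.sum_le_tsum _ (fun i _ => by positivity)
                  (summable_geometric_of_lt_one (norm_nonneg _) hQ)
  have hUpos : 0 < U := Real.exp_pos _
  -- uniform bound on the Gaussian binomials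
  have hqB : ∀ M k, ‖qBinom (x ^ 2) M k‖ ≤ U / (c * c) := by
    intro M k
    rcases le_or_gt k M with h | h
    · rw [qBinom, if_pos h, norm_div, norm_mul]
      exact div_le_div₀ hUpos.le (hUb M) (by positivity)
        (mul_le_mul (hclb k) (hclb (M - k)) hcpos.le (norm_nonneg _))
    · rw [qBinom_of_gt h, norm_zero]
      positivity
  -- the doubly-infinite sequence of partial theta sums
  set g : ℕ → ℤ → ℂ := fun N n =>
    if n.natAbs ≤ N then qBinom (x ^ 2) (2 * N) (n + N).toNat * (x ^ (n ^ 2) * z ^ n) else 0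
    with hg
  have step2 : ∀ N : ℕ,
      (∑ k ∈ Finset.range (2 * N + 1),
        qBinom (x ^ 2) (2 * N) k * x ^ (((k : ℤ) - N) ^ 2) * z ^ ((k : ℤ) - N))
        = ∑' n : ℤ, g N n := by
    intro N
    rw [tsum_eq_sum (s := Finset.Icc (-(N : ℤ)) N)
      (f := g N) (fun n hn => by
        rw [hg]
        simp only
        rw [if_neg]
        simp only [Finset.mem_Icc] at hn
        omega)]
    apply Finset.sum_nbij' (i := fun k : ℕ => (k : ℤ) - N) (j := fun n : ℤ => (n + N).toNat)
    · intro k hk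
      simp only [Finset.mem_range] at hk
      simp only [Finset.mem_Icc]
      omega
    · intro n hn
      simp only [Finset.mem_Icc] at hn
      simp only [Finset.mem_range]
      omega
    · intro k hk; omega
    · intro n hn
      simp only [Finset.mem_Icc] at hn
      omega
    · intro k hk
      simp only [Finset.mem_range] at hk
      rw [hg]
      simp only
      rw [if_pos (by omega), show ((k : ℤ) - N + N).toNat = k by omega]
      ring
  -- dominated convergence
  have hbound_summable : Summable (fun n : ℤ => U / (c * c) * ‖x ^ (n ^ 2) * z ^ n‖) :=
    (summable_norm_theta hx0 hx1 hz).mul_left _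
  have step3 : Tendsto (fun N => ∑' n : ℤ, g N n) atTop
      (𝓝 (∑' n : ℤ, L / (L * L) * (x ^ (n ^ 2) * z ^ n))) := by
    apply tendsto_tsum_of_dominated_convergence hbound_summable
    · intro n
      have h2N : Tendsto (fun N : ℕ => 2 * N) atTop atTop :=
        tendsto_atTop_atTop.2 fun b => ⟨b, fun a ha => by omega⟩
      have hplus : Tendsto (fun N : ℕ => ((n : ℤ) + N).toNat) atTop atTop :=
        tendsto_atTop_atTop.2 fun b => ⟨b + n.natAbs, fun a ha => by omega⟩
      have hminus : Tendsto (fun N : ℕ => 2 * N - ((n : ℤ) + N).toNat) atTop atTop :=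
        tendsto_atTop_atTop.2 fun b => ⟨b + n.natAbs, fun a ha => by omega⟩
      have hRHS : Tendsto (fun N : ℕ =>
          Ppoch (x ^ 2) (2 * N) /
            (Ppoch (x ^ 2) ((n + N).toNat) * Ppoch (x ^ 2) (2 * N - (n + N).toNat))
          * (x ^ (n ^ 2) * z ^ n)) atTop (𝓝 (L / (L * L) * (x ^ (n ^ 2) * z ^ n))) := by
        apply Tendsto.mul_const
        exact Tendsto.div (hPlim.comp h2N) ((hPlim.comp hplus).mul (hPlim.comp hminus))
          (mul_ne_zero hLne hLne)
      apply hRHS.congr'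
      filter_upwards [eventually_ge_atTop n.natAbs] with N hN
      rw [hg]
      simp only
      rw [if_pos hN, qBinom, if_pos (by omega)]
    · filter_upwards with N n
      rw [hg]
      simp only
      split
      · rw [norm_mul]
        exact mul_le_mul_of_nonneg_right (hqB _ _) (norm_nonneg _)
      · rw [norm_zero]
        positivity
  -- limit of the product side
  have prodlim : Tendsto (fun N : ℕ =>
      ∏ i ∈ Finset.range N, ((1 + z * x ^ (2 * i + 1)) * (1 + z⁻¹ * x ^ (2 * i + 1)))) atTop
      (𝓝 (qPochInf (x ^ 2) (-(z * x)) * qPochInf (x ^ 2) (-(z⁻¹ * x)))) := by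
    have hterm : ∀ (w : ℂ) (i : ℕ), (1 : ℂ) - -(w * x) * (x ^ 2) ^ i = 1 + w * x ^ (2 * i + 1) := by
      intro w i
      rw [show x ^ (2 * i + 1) = (x ^ 2) ^ i * x by rw [pow_succ, pow_mul]]
      ring
    have t1 : Tendsto (fun N : ℕ => ∏ i ∈ Finset.range N, (1 + z * x ^ (2 * i + 1))) atTop
        (𝓝 (qPochInf (x ^ 2) (-(z * x)))) :=
      (tendsto_qPochInf (x ^ 2) (-(z * x)) hQ).congr
        fun N => Finset.prod_congr rfl fun i _ => hterm z i
    have t2 : Tendsto (fun N : ℕ => ∏ i ∈ Finset.range N, (1 + z⁻¹ * x ^ (2 * i + 1))) atTop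
        (𝓝 (qPochInf (x ^ 2) (-(z⁻¹ * x)))) :=
      (tendsto_qPochInf (x ^ 2) (-(z⁻¹ * x)) hQ).congr
        fun N => Finset.prod_congr rfl fun i _ => hterm z⁻¹ i
    exact (t1.mul t2).congr fun N => (Finset.prod_mul_distrib).symm
  -- identify the two limits
  have key : qPochInf (x ^ 2) (-(z * x)) * qPochInf (x ^ 2) (-(z⁻¹ * x))
      = ∑' n : ℤ, L / (L * L) * (x ^ (n ^ 2) * z ^ n) := by
    apply tendsto_nhds_unique _ step3
    apply prodlim.congr
    intro N
    rw [finite_jtp hx0 hx1 hz N, step2 N]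
  rw [tsum_mul_left, show L / (L * L) = L⁻¹ by field_simp] at key
  have : ∑' n : ℤ, x ^ (n ^ 2) * z ^ n
      = L * (qPochInf (x ^ 2) (-(z * x)) * qPochInf (x ^ 2) (-(z⁻¹ * x))) := by
    rw [key]
    field_simp
  rw [this]
  ring

/-- The double bilateral theta sum identity: with $x = q^{1/2}$,
$\sum_{m,n\in\mathbb{Z}} z_1^m z_2^n q^{(m^2+n^2-mn)/2}$ equals
$(-z_1^2z_2q^{3/2},-z_1^{-2}z_2^{-1}q^{3/2},q^3;q^3)_\infty(-z_2q^{1/2},-z_2^{-1}q^{1/2},q;q)_\infty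
+ z_1q^{1/2}(-z_1^2z_2q^3,-z_1^{-2}z_2^{-1},q^3;q^3)_\infty(-z_2,-z_2^{-1}q,q;q)_\infty$. -/
theorem double_sum_rep (q x z₁ z₂ : ℂ) (hx : x ^ 2 = q) (hq : ‖q‖ < 1)
    (hz₁ : z₁ ≠ 0) (hz₂ : z₂ ≠ 0) :
    ∑' p : ℤ × ℤ, z₁ ^ p.1 * z₂ ^ p.2 * x ^ (p.1 ^ 2 + p.2 ^ 2 - p.1 * p.2)
      = qPochInf (q ^ 3) (-(z₁ ^ 2 * z₂ * x ^ 3)) *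
          qPochInf (q ^ 3) (-(z₁⁻¹ ^ 2 * z₂⁻¹ * x ^ 3)) * qPochInf (q ^ 3) (q ^ 3) *
          (qPochInf q (-(z₂ * x)) * qPochInf q (-(z₂⁻¹ * x)) * qPochInf q q)
        + z₁ * x * (qPochInf (q ^ 3) (-(z₁ ^ 2 * z₂ * q ^ 3)) *
            qPochInf (q ^ 3) (-(z₁⁻¹ ^ 2 * z₂⁻¹)) * qPochInf (q ^ 3) (q ^ 3)) *
          (qPochInf q (-z₂) * qPochInf q (-(z₂⁻¹ * q)) * qPochInf q q) := by
  rcases eq_or_ne x 0 with hx0 | hx0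
  · -- degenerate case x = 0 (so q = 0)
    have hq0 : q = 0 := by rw [← hx, hx0]; ring
    subst hq0; subst hx0
    have hL : (∑' p : ℤ × ℤ, z₁ ^ p.1 * z₂ ^ p.2 * (0:ℂ) ^ (p.1 ^ 2 + p.2 ^ 2 - p.1 * p.2))
        = 1 := by
      rw [tsum_eq_single (0 : ℤ × ℤ) ?_]
      · norm_num
      · rintro ⟨m, n⟩ hmn
        have h2 : m ^ 2 + n ^ 2 - m * n ≠ 0 := by
          intro h
          apply hmn
          have hm : m = 0 ∧ n = 0 := by
            constructor <;> nlinarith [sq_nonneg (m - n), sq_nonneg m, sq_nonneg n]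
          simp [Prod.ext_iff, hm.1, hm.2]
        rw [zero_zpow _ h2]
        ring
    have hP1 : qPochInf 0 0 = 1 := by simp [qPochInf]
    rw [hL]
    norm_num [hP1]
  · -- main case
    have hq0 : q ≠ 0 := by rw [← hx]; exact pow_ne_zero _ hx0
    have hx1 : ‖x‖ < 1 := by
      by_contra h
      push_neg at h
      have h2 : (1:ℝ) ≤ ‖x‖ ^ 2 := one_le_pow₀ h
      rw [← norm_pow, hx] at h2
      linarith
    have hx30 : x ^ 3 ≠ 0 := pow_ne_zero _ hx0
    have hx31 : ‖x ^ 3‖ < 1 := by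
      rw [norm_pow]; exact pow_lt_one₀ (norm_nonneg x) hx1 (by norm_num)
    have hz12 : z₁ ^ 2 * z₂ ≠ 0 := mul_ne_zero (pow_ne_zero _ hz₁) hz₂
    have hz12' : z₁ ^ 2 * z₂ * x ^ 3 ≠ 0 := mul_ne_zero hz12 hx30
    have hz2x : z₂ * x⁻¹ ≠ 0 := mul_ne_zero hz₂ (inv_ne_zero hx0)
    set F : ℤ × ℤ → ℂ := fun p => z₁ ^ p.1 * z₂ ^ p.2 * x ^ (p.1 ^ 2 + p.2 ^ 2 - p.1 * p.2)
      with hF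
    set a : ℤ → ℂ := fun k => (x ^ 3) ^ (k ^ 2) * (z₁ ^ 2 * z₂) ^ k with ha
    set b : ℤ → ℂ := fun j => x ^ (j ^ 2) * z₂ ^ j with hb
    set a' : ℤ → ℂ := fun k => (x ^ 3) ^ (k ^ 2) * (z₁ ^ 2 * z₂ * x ^ 3) ^ k with ha'
    set b' : ℤ → ℂ := fun j => x ^ (j ^ 2) * (z₂ * x⁻¹) ^ j with hb'
    have hna : Summable (fun k : ℤ => ‖a k‖) := summable_norm_theta hx30 hx31 hz12
    have hnb : Summable (fun j : ℤ => ‖b j‖) := summable_norm_theta hx0 hx1 hz₂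
    have hna' : Summable (fun k : ℤ => ‖a' k‖) := summable_norm_theta hx30 hx31 hz12'
    have hnb' : Summable (fun j : ℤ => ‖b' j‖) := summable_norm_theta hx0 hx1 hz2x
    have hab : HasSum (fun p : ℤ × ℤ => a p.1 * b p.2) ((∑' k, a k) * (∑' j, b j)) := by
      rw [tsum_mul_tsum_of_summable_norm hna hnb]
      exact (summable_mul_of_summable_norm hna hnb).hasSum
    have hab' : HasSum (fun p : ℤ × ℤ => z₁ * x * (a' p.1 * b' p.2))
        (z₁ * x * ((∑' k, a' k) * (∑' j, b' j))) := by
      apply HasSum.mul_left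
      rw [tsum_mul_tsum_of_summable_norm hna' hnb']
      exact (summable_mul_of_summable_norm hna' hnb').hasSum
    -- reindexing
    set g₁ : ℤ × ℤ → ℤ × ℤ := fun p => (2 * p.1, p.2 + p.1) with hg₁
    set g₂ : ℤ × ℤ → ℤ × ℤ := fun p => (2 * p.1 + 1, p.2 + p.1) with hg₂
    have hinj₁ : Function.Injective g₁ := by
      rintro ⟨k, j⟩ ⟨k', j'⟩ h
      simp only [hg₁, Prod.mk.injEq] at h ⊢
      omega
    have hinj₂ : Function.Injective g₂ := by
      rintro ⟨k, j⟩ ⟨k', j'⟩ h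
      simp only [hg₂, Prod.mk.injEq] at h ⊢
      omega
    have hcompl : IsCompl (Set.range g₁) (Set.range g₂) := by
      constructor
      · rw [Set.disjoint_left]
        rintro p ⟨⟨k, j⟩, rfl⟩ ⟨⟨k', j'⟩, h⟩
        have h1 := congrArg Prod.fst h
        simp only [hg₁, hg₂] at h1
        omega
      · rw [codisjoint_iff_le_sup]
        rintro ⟨m, n⟩ -
        have hmem : (m, n) ∈ Set.range g₁ ∪ Set.range g₂ := by
          rcases Int.even_or_odd m with ⟨k, hk⟩ | ⟨k, hk⟩
          · exact Or.inl ⟨(k, n - k), by simp only [hg₁, Prod.mk.injEq]; omega⟩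
          · exact Or.inr ⟨(k, n - k), by simp only [hg₂, Prod.mk.injEq]; omega⟩
        exact hmem
    have hfe₁ : (fun p : ℤ × ℤ => F (g₁ p)) = fun p : ℤ × ℤ => a p.1 * b p.2 := by
      funext ⟨k, j⟩
      simp only [hF, hg₁, ha, hb]
      rw [show (2*k)^2 + (j+k)^2 - (2*k)*(j+k) = 3*k^2 + j^2 by ring]
      rw [← zpow_natCast x 3, ← zpow_natCast z₁ 2, ← zpow_mul, zpow_add₀ hz₂, zpow_add₀ hx0,
        mul_zpow, ← zpow_mul z₁]
      push_cast
      ring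
    have hfe₂ : (fun p : ℤ × ℤ => F (g₂ p)) = fun p : ℤ × ℤ => z₁ * x * (a' p.1 * b' p.2) := by
      funext ⟨k, j⟩
      simp only [hF, hg₂, ha', hb']
      have e1 : (z₁^2 * z₂ * x^3 : ℂ) ^ k = z₁^(2*k) * z₂^k * x^(3*k) := by
        rw [mul_zpow, mul_zpow, ← zpow_natCast z₁ 2, ← zpow_natCast x 3, ← zpow_mul, ← zpow_mul]
        push_cast
        ring
      have e2 : ((x^3 : ℂ)) ^ (k^2) = x^(3*k^2) := by
        rw [← zpow_natCast x 3, ← zpow_mul]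
        push_cast
        ring
      have e3 : (z₂ * x⁻¹ : ℂ) ^ j = z₂^j * x^(-j) := by
        rw [mul_zpow, inv_zpow, ← zpow_neg]
      have e4 : x ^ (3*k^2 + (3*k + (j^2 + (-j+1))))
          = x^(3*k^2) * x^(3*k) * x^(j^2) * x^(-j) * x := by
        rw [zpow_add₀ hx0, zpow_add₀ hx0, zpow_add₀ hx0, zpow_add₀ hx0, zpow_one]
        ring
      have e5 : z₁ ^ (2*k+1) = z₁^(2*k) * z₁ := by rw [zpow_add₀ hz₁, zpow_one]
      rw [show (2*k+1)^2 + (j+k)^2 - (2*k+1)*(j+k) = 3*k^2 + (3*k + (j^2 + (-j + 1))) by ring]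
      rw [e5, zpow_add₀ hz₂, e4, e1, e2, e3]
      ring
    have h1 : HasSum (fun p : ℤ × ℤ => F (g₁ p)) ((∑' k, a k) * (∑' j, b j)) := by
      rw [hfe₁]; exact hab
    have h2 : HasSum (fun p : ℤ × ℤ => F (g₂ p)) (z₁ * x * ((∑' k, a' k) * (∑' j, b' j))) := by
      rw [hfe₂]; exact hab'
    have htotal : HasSum F ((∑' k, a k) * (∑' j, b j)
        + z₁ * x * ((∑' k, a' k) * (∑' j, b' j))) :=
      HasSum.add_isCompl hcompl (hinj₁.hasSum_range_iff.2 h1) (hinj₂.hasSum_range_iff.2 h2)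
    rw [show (∑' p : ℤ × ℤ, z₁ ^ p.1 * z₂ ^ p.2 * x ^ (p.1 ^ 2 + p.2 ^ 2 - p.1 * p.2))
      = ∑' p, F p from rfl, htotal.tsum_eq]
    -- evaluate the four theta sums
    have hSa : ∑' k : ℤ, a k = qPochInf (q^3) (q^3) * qPochInf (q^3) (-(z₁^2 * z₂ * x^3)) *
        qPochInf (q^3) (-(z₁⁻¹^2 * z₂⁻¹ * x^3)) := by
      rw [ha, jacobi_triple_product hx30 hx31 hz12,
        show (x^3)^2 = q^3 by rw [← hx]; ring,
        show (z₁^2 * z₂)⁻¹ = z₁⁻¹^2 * z₂⁻¹ by rw [mul_inv, inv_pow]]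
    have hSb : ∑' j : ℤ, b j = qPochInf q q * qPochInf q (-(z₂ * x)) *
        qPochInf q (-(z₂⁻¹ * x)) := by
      rw [hb, jacobi_triple_product hx0 hx1 hz₂, hx]
    have hSa' : ∑' k : ℤ, a' k = qPochInf (q^3) (q^3) * qPochInf (q^3) (-(z₁^2 * z₂ * q^3)) *
        qPochInf (q^3) (-(z₁⁻¹^2 * z₂⁻¹)) := by
      rw [ha', jacobi_triple_product hx30 hx31 hz12',
        show (x^3)^2 = q^3 by rw [← hx]; ring,
        show z₁^2 * z₂ * x^3 * x^3 = z₁^2 * z₂ * q^3 by rw [← hx]; ring,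
        show (z₁^2 * z₂ * x^3)⁻¹ * x^3 = z₁⁻¹^2 * z₂⁻¹ by
          rw [mul_inv, mul_assoc, inv_mul_cancel₀ hx30, mul_one, mul_inv, inv_pow]]
    have hSb' : ∑' j : ℤ, b' j = qPochInf q q * qPochInf q (-z₂) *
        qPochInf q (-(z₂⁻¹ * q)) := by
      rw [hb', jacobi_triple_product hx0 hx1 hz2x, hx,
        show z₂ * x⁻¹ * x = z₂ by field_simp,
        show (z₂ * x⁻¹)⁻¹ * x = z₂⁻¹ * q by rw [mul_inv, inv_inv, ← hx]; ring]
    rw [hSa, hSb, hSa', hSb']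
    ring
end
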